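/- For all real parameters c_α, c_β > 0 with c_α + c_β > 1, the Wachter measure is a probability measure: σ^{JUE}_{c_α,c_β}(ℝ) = 1. -/

import Mathlib

open MeasureTheory Real

/-- Left endpoint `λ₋` of the support of the continuous part of the Wachter law. -/
noncomputable def lamMinus (ca cb : ℝ) : ℝ :=
  (ca * (ca + cb - 1) + cb - 2 * Real.sqrt (ca * cb * (ca + cb - 1))) / (ca + cb) ^ 2

/-- Right endpoint `λ₊` of the support of the continuous part of the Wachter law. -/
noncomputable def lamPlus (ca cb : ℝ) : ℝ :=
  (ca * (ca + cb - 1) + cb + 2 * Real.sqrt (ca * cb * (ca + cb - 1))) / (ca + cb) ^ 2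

/-- The Wachter (Jacobi/MANOVA) limiting measure `σ^{JUE}_{c_α,c_β}`: atoms of mass
`max(0, 1−c_α)` at `0` and `max(0, 1−c_β)` at `1`, plus the absolutely continuous part with
density `(c_α+c_β)·√((λ₊−x)(x−λ₋))/(2πx(1−x))` on `(λ₋, λ₊)`. -/
noncomputable def sigmaJUE (ca cb : ℝ) : Measure ℝ :=
  ENNReal.ofReal (max 0 (1 - ca)) • Measure.dirac 0
    + ENNReal.ofReal (max 0 (1 - cb)) • Measure.dirac 1
    + volume.withDensity (fun x =>
        if x ∈ Set.Ioo (lamMinus ca cb) (lamPlus ca cb) then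
          ENNReal.ofReal ((ca + cb) *
            Real.sqrt ((lamPlus ca cb - x) * (x - lamMinus ca cb)) / (2 * π * x * (1 - x)))
        else 0)

section WachterAux

open Set intervalIntegral

/-- Antiderivative of `√((b-x)(x-a))/(x(1-x))` on `(a,b) ⊆ (0,1)`. -/
noncomputable def wachterF (a b : ℝ) (x : ℝ) : ℝ :=
  Real.arcsin ((2*x - (a+b)) / (b - a))
  + Real.sqrt (a*b) * Real.arcsin ((2*(a*b) - (a+b)*x) / (x*(b-a)))
  - Real.sqrt ((1-a)*(1-b)) *
      Real.arcsin ((2*((1-a)*(1-b)) - ((1-a)+(1-b))*(1-x)) / ((1-x)*(b-a)))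

lemma wachter_hasDerivAt_term1 {a b x : ℝ} (hx : x ∈ Ioo a b) :
    HasDerivAt (fun x => Real.arcsin ((2*x - (a+b)) / (b - a)))
      (1 / Real.sqrt ((b - x) * (x - a))) x := by
  obtain ⟨hxa, hxb⟩ := hx
  have hba : 0 < b - a := by linarith
  have hR : 0 < (b - x) * (x - a) := mul_pos (by linarith) (by linarith)
  have hsR : 0 < Real.sqrt ((b - x) * (x - a)) := Real.sqrt_pos.2 hR
  have hg : HasDerivAt (fun x : ℝ => (2*x - (a+b)) / (b - a)) (2 / (b - a)) x := by
    simpa using (((hasDerivAt_id x).const_mul 2).sub_const (a+b)).div_const (b - a)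
  have h1 : (2*x - (a+b)) / (b - a) ≠ -1 := by
    intro h; rw [div_eq_iff hba.ne'] at h; nlinarith
  have h2 : (2*x - (a+b)) / (b - a) ≠ 1 := by
    intro h; rw [div_eq_iff hba.ne'] at h; nlinarith
  have := (Real.hasDerivAt_arcsin h1 h2).comp x hg
  refine this.congr_deriv ?_
  have e1 : 1 - ((2*x - (a+b)) / (b - a)) ^ 2 = (2/(b-a))^2 * ((b - x) * (x - a)) := by
    field_simp; ring
  rw [e1, Real.sqrt_mul (sq_nonneg _), Real.sqrt_sq (by positivity)]
  field_simp

lemma wachter_hasDerivAt_term2 {a b x : ℝ} (ha : 0 ≤ a) (hx : x ∈ Ioo a b) :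
    HasDerivAt (fun x => Real.sqrt (a*b) * Real.arcsin ((2*(a*b) - (a+b)*x) / (x*(b-a))))
      (-(a*b) / (x * Real.sqrt ((b - x) * (x - a)))) x := by
  obtain ⟨hxa, hxb⟩ := hx
  rcases eq_or_lt_of_le ha with ha0 | ha0
  · simp only [← ha0, zero_mul, Real.sqrt_zero, neg_zero, zero_div]
    exact hasDerivAt_const x 0
  · have hx0 : 0 < x := lt_trans ha0 hxa
    have hb0 : 0 < b := lt_trans hx0 hxb
    have hba : 0 < b - a := by linarith
    have hR : 0 < (b - x) * (x - a) := mul_pos (by linarith) (by linarith)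
    have hsR : 0 < Real.sqrt ((b - x) * (x - a)) := Real.sqrt_pos.2 hR
    have hab0 : 0 < a * b := mul_pos ha0 hb0
    have hsab : 0 < Real.sqrt (a*b) := Real.sqrt_pos.2 hab0
    have hu : HasDerivAt (fun x : ℝ => (2*(a*b) - (a+b)*x) / (x*(b-a)))
        (-(2*(a*b)) / (x^2*(b-a))) x := by
      have h1 : HasDerivAt (fun x : ℝ => 2*(a*b) - (a+b)*x) (-(a+b)) x := by
        simpa using ((hasDerivAt_id x).const_mul (a+b)).const_sub (2*(a*b))
      have h2 : HasDerivAt (fun x : ℝ => x*(b-a)) (b-a) x := by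
        simpa using (hasDerivAt_id x).mul_const (b-a)
      have hne : x*(b-a) ≠ 0 := by positivity
      have := h1.div h2 hne
      refine this.congr_deriv ?_
      field_simp
      ring
    set u : ℝ := (2*(a*b) - (a+b)*x) / (x*(b-a)) with hu_def
    have key : 1 - u^2 = (2/(x*(b-a)))^2 * ((a*b) * ((b - x) * (x - a))) := by
      rw [hu_def]; field_simp; ring
    have hupos : 0 < 1 - u^2 := by rw [key]; positivity
    have h1 : u ≠ -1 := by intro h; rw [h] at hupos; norm_num at hupos
    have h2 : u ≠ 1 := by intro h; rw [h] at hupos; norm_num at hupos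
    have harc := (Real.hasDerivAt_arcsin h1 h2).comp x hu
    have := harc.const_mul (Real.sqrt (a*b))
    refine this.congr_deriv ?_
    have e2 : Real.sqrt (1 - u^2)
        = (2/(x*(b-a))) * (Real.sqrt (a*b) * Real.sqrt ((b - x) * (x - a))) := by
      rw [key, Real.sqrt_mul (sq_nonneg _), Real.sqrt_sq (by positivity),
        Real.sqrt_mul hab0.le]
    rw [e2]
    field_simp

lemma wachter_hasDerivAt_term3 {a b x : ℝ} (hb : b ≤ 1) (hx : x ∈ Ioo a b) :
    HasDerivAt (fun x => Real.sqrt ((1-a)*(1-b)) *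
        Real.arcsin ((2*((1-a)*(1-b)) - ((1-a)+(1-b))*(1-x)) / ((1-x)*(b-a))))
      ((1-a)*(1-b) / ((1-x) * Real.sqrt ((b - x) * (x - a)))) x := by
  obtain ⟨hxa, hxb⟩ := hx
  rcases eq_or_lt_of_le hb with hb1 | hb1
  · simp only [hb1, sub_self, mul_zero, Real.sqrt_zero, zero_mul, zero_div]
    exact hasDerivAt_const x 0
  · have hx1 : x < 1 := lt_trans hxb hb1
    have hy0 : 0 < 1 - x := by linarith
    have ha1 : a < 1 := lt_trans hxa hx1
    have hba : 0 < b - a := by linarith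
    have hR : 0 < (b - x) * (x - a) := mul_pos (by linarith) (by linarith)
    have hsR : 0 < Real.sqrt ((b - x) * (x - a)) := Real.sqrt_pos.2 hR
    have hab0 : 0 < (1-a) * (1-b) := mul_pos (by linarith) (by linarith)
    have hsab : 0 < Real.sqrt ((1-a)*(1-b)) := Real.sqrt_pos.2 hab0
    have hu : HasDerivAt (fun x : ℝ => (2*((1-a)*(1-b)) - ((1-a)+(1-b))*(1-x)) / ((1-x)*(b-a)))
        (2*((1-a)*(1-b)) / ((1-x)^2*(b-a))) x := by
      have h1 : HasDerivAt (fun x : ℝ => 2*((1-a)*(1-b)) - ((1-a)+(1-b))*(1-x))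
          ((1-a)+(1-b)) x := by
        have := (((hasDerivAt_id x).const_sub 1).const_mul ((1-a)+(1-b))).const_sub
          (2*((1-a)*(1-b)))
        refine this.congr_deriv ?_; ring
      have h2 : HasDerivAt (fun x : ℝ => (1-x)*(b-a)) (-(b-a)) x := by
        have := ((hasDerivAt_id x).const_sub 1).mul_const (b-a)
        refine this.congr_deriv ?_; ring
      have hne : (1-x)*(b-a) ≠ 0 := by positivity
      have := h1.div h2 hne
      refine this.congr_deriv ?_
      field_simp
      ring
    set u : ℝ := (2*((1-a)*(1-b)) - ((1-a)+(1-b))*(1-x)) / ((1-x)*(b-a)) with hu_def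
    have key : 1 - u^2 = (2/((1-x)*(b-a)))^2 * (((1-a)*(1-b)) * ((b - x) * (x - a))) := by
      rw [hu_def]; field_simp; ring
    have hupos : 0 < 1 - u^2 := by rw [key]; positivity
    have h1 : u ≠ -1 := by intro h; rw [h] at hupos; norm_num at hupos
    have h2 : u ≠ 1 := by intro h; rw [h] at hupos; norm_num at hupos
    have harc := (Real.hasDerivAt_arcsin h1 h2).comp x hu
    have := harc.const_mul (Real.sqrt ((1-a)*(1-b)))
    refine this.congr_deriv ?_
    have e2 : Real.sqrt (1 - u^2)
        = (2/((1-x)*(b-a))) * (Real.sqrt ((1-a)*(1-b)) * Real.sqrt ((b - x) * (x - a))) := by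
      rw [key, Real.sqrt_mul (sq_nonneg _), Real.sqrt_sq (by positivity),
        Real.sqrt_mul hab0.le]
    rw [e2]
    field_simp

lemma wachter_hasDerivAt {a b x : ℝ} (ha : 0 ≤ a) (hb : b ≤ 1) (hx : x ∈ Ioo a b) :
    HasDerivAt (wachterF a b)
      (Real.sqrt ((b - x) * (x - a)) / (x * (1 - x))) x := by
  obtain ⟨hxa, hxb⟩ := hx
  have hx0 : 0 < x := lt_of_le_of_lt ha hxa
  have hx1 : x < 1 := lt_of_lt_of_le hxb hb
  have hR : 0 < (b - x) * (x - a) := mul_pos (by linarith) (by linarith)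
  have hsR : 0 < Real.sqrt ((b - x) * (x - a)) := Real.sqrt_pos.2 hR
  have hRR : Real.sqrt ((b - x) * (x - a)) * Real.sqrt ((b - x) * (x - a))
      = (b - x) * (x - a) := Real.mul_self_sqrt hR.le
  have := ((wachter_hasDerivAt_term1 ⟨hxa, hxb⟩).add
    (wachter_hasDerivAt_term2 ha ⟨hxa, hxb⟩)).sub (wachter_hasDerivAt_term3 hb ⟨hxa, hxb⟩)
  refine this.congr_deriv ?_
  have h1x : (0:ℝ) < 1 - x := by linarith
  field_simp
  linear_combination (-1) * hRR

lemma wachter_continuousOn {a b : ℝ} (ha : 0 ≤ a) (hab : a < b) (hb : b ≤ 1) :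
    ContinuousOn (wachterF a b) (Icc a b) := by
  have hba : b - a ≠ 0 := by intro h; linarith [hab]
  have c1 : ContinuousOn (fun x : ℝ => Real.arcsin ((2*x - (a+b)) / (b - a))) (Icc a b) :=
    (Real.continuous_arcsin.comp (by fun_prop)).continuousOn
  have c2 : ContinuousOn
      (fun x : ℝ => Real.sqrt (a*b) * Real.arcsin ((2*(a*b) - (a+b)*x) / (x*(b-a)))) (Icc a b) := by
    rcases eq_or_lt_of_le ha with ha0 | ha0
    · have : (fun x : ℝ => Real.sqrt (a*b) * Real.arcsin ((2*(a*b) - (a+b)*x) / (x*(b-a))))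
          = fun _ => 0 := by
        funext x; simp [← ha0]
      rw [this]; exact continuousOn_const
    · apply continuousOn_const.mul
      apply Real.continuous_arcsin.comp_continuousOn
      apply ContinuousOn.div (by fun_prop) (by fun_prop)
      intro x hx
      have : 0 < x := lt_of_lt_of_le ha0 hx.1
      have : 0 < x * (b - a) := by nlinarith
      exact this.ne'
  have c3 : ContinuousOn
      (fun x : ℝ => Real.sqrt ((1-a)*(1-b)) *
        Real.arcsin ((2*((1-a)*(1-b)) - ((1-a)+(1-b))*(1-x)) / ((1-x)*(b-a)))) (Icc a b) := by
    rcases eq_or_lt_of_le hb with hb1 | hb1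
    · have : (fun x : ℝ => Real.sqrt ((1-a)*(1-b)) *
          Real.arcsin ((2*((1-a)*(1-b)) - ((1-a)+(1-b))*(1-x)) / ((1-x)*(b-a))))
          = fun _ => 0 := by
        funext x; simp [hb1]
      rw [this]; exact continuousOn_const
    · apply continuousOn_const.mul
      apply Real.continuous_arcsin.comp_continuousOn
      apply ContinuousOn.div (by fun_prop) (by fun_prop)
      intro x hx
      have h1 : x < 1 := lt_of_le_of_lt hx.2 hb1
      have : 0 < (1 - x) * (b - a) := by nlinarith
      exact this.ne'
  exact (c1.add c2).sub c3

lemma wachterF_eval_b {a b : ℝ} (ha : 0 ≤ a) (hab : a < b) (hb : b ≤ 1) :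
    wachterF a b b = π/2 * (1 - Real.sqrt (a*b) - Real.sqrt ((1-a)*(1-b))) := by
  have hb0 : 0 < b := lt_of_le_of_lt ha hab
  have hba : b - a ≠ 0 := by intro h; linarith
  have e1 : (2*b - (a+b)) / (b - a) = 1 := by rw [div_eq_one_iff_eq hba]; ring
  have e2 : (2*(a*b) - (a+b)*b) / (b*(b-a)) = -1 := by
    rw [div_eq_iff (by positivity)]; ring
  have t3 : Real.sqrt ((1-a)*(1-b)) *
      Real.arcsin ((2*((1-a)*(1-b)) - ((1-a)+(1-b))*(1-b)) / ((1-b)*(b-a)))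
      = Real.sqrt ((1-a)*(1-b)) * (π/2) := by
    rcases eq_or_lt_of_le hb with rfl | hb1
    · simp
    · have hden : (0:ℝ) < (1-b)*(b-a) := mul_pos (by linarith) (by linarith)
      have e3 : (2*((1-a)*(1-b)) - ((1-a)+(1-b))*(1-b)) / ((1-b)*(b-a)) = 1 := by
        rw [div_eq_one_iff_eq hden.ne']; ring
      rw [e3, Real.arcsin_one]
  simp only [wachterF, e1, e2, Real.arcsin_one, Real.arcsin_neg_one, t3]
  ring

lemma wachterF_eval_a {a b : ℝ} (ha : 0 ≤ a) (hab : a < b) (hb : b ≤ 1) :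
    wachterF a b a = -(π/2) * (1 - Real.sqrt (a*b) - Real.sqrt ((1-a)*(1-b))) := by
  have ha1 : a < 1 := lt_of_lt_of_le hab hb
  have hba : b - a ≠ 0 := by intro h; linarith
  have e1 : (2*a - (a+b)) / (b - a) = -1 := by rw [div_eq_iff hba]; ring
  have hden3 : (0:ℝ) < (1-a)*(b-a) := mul_pos (by linarith) (by linarith)
  have e3 : (2*((1-a)*(1-b)) - ((1-a)+(1-b))*(1-a)) / ((1-a)*(b-a)) = -1 := by
    rw [div_eq_iff hden3.ne']; ring
  have t2 : Real.sqrt (a*b) * Real.arcsin ((2*(a*b) - (a+b)*a) / (a*(b-a)))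
      = Real.sqrt (a*b) * (π/2) := by
    rcases eq_or_lt_of_le ha with rfl | ha0
    · simp
    · have hden : (0:ℝ) < a*(b-a) := mul_pos ha0 (by linarith)
      have e2 : (2*(a*b) - (a+b)*a) / (a*(b-a)) = 1 := by
        rw [div_eq_one_iff_eq hden.ne']; ring
      rw [e2, Real.arcsin_one]
  simp only [wachterF, e1, e3, Real.arcsin_neg_one, t2]
  ring

lemma wachter_integrableOn {a b : ℝ} (ha : 0 ≤ a) (hab : a < b) (hb : b ≤ 1) :
    IntegrableOn (fun x => Real.sqrt ((b - x) * (x - a)) / (x * (1 - x))) (Ioo a b) := by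
  have h := intervalIntegral.integrableOn_deriv_of_nonneg (wachter_continuousOn ha hab hb)
    (fun x hx => wachter_hasDerivAt ha hb hx)
    (fun x hx => by
      have h1 : 0 < x := lt_of_le_of_lt ha hx.1
      have h2 : x < 1 := lt_of_lt_of_le hx.2 hb
      have : 0 < x * (1 - x) := mul_pos h1 (by linarith)
      positivity)
  exact h.mono_set Ioo_subset_Ioc_self

lemma wachter_integral {a b : ℝ} (ha : 0 ≤ a) (hab : a < b) (hb : b ≤ 1) :
    ∫ x in Ioo a b, Real.sqrt ((b - x) * (x - a)) / (x * (1 - x))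
      = π * (1 - Real.sqrt (a*b) - Real.sqrt ((1-a)*(1-b))) := by
  have hint : IntervalIntegrable
      (fun x => Real.sqrt ((b - x) * (x - a)) / (x * (1 - x))) volume a b := by
    rw [intervalIntegrable_iff_integrableOn_Ioo_of_le hab.le]
    exact wachter_integrableOn ha hab hb
  have := intervalIntegral.integral_eq_sub_of_hasDerivAt_of_le hab.le
    (wachter_continuousOn ha hab hb) (fun x hx => wachter_hasDerivAt ha hb hx) hint
  rw [wachterF_eval_b ha hab hb, wachterF_eval_a ha hab hb] at this
  rw [← MeasureTheory.integral_Ioc_eq_integral_Ioo, ← intervalIntegral.integral_of_le hab.le,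
    this]
  ring

lemma wachter_lam_facts {ca cb : ℝ} (hca : 0 < ca) (hcb : 0 < cb) (hsum : 1 < ca + cb) :
    0 ≤ lamMinus ca cb ∧ lamMinus ca cb < lamPlus ca cb ∧ lamPlus ca cb ≤ 1 ∧
    Real.sqrt (lamMinus ca cb * lamPlus ca cb) = |ca - 1| / (ca + cb) ∧
    Real.sqrt ((1 - lamMinus ca cb) * (1 - lamPlus ca cb)) = |cb - 1| / (ca + cb) := by
  have hs : 0 < ca + cb := by linarith
  have ht : 0 < ca + cb - 1 := by linarith
  have hD : 0 < ca * cb * (ca + cb - 1) := by positivity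
  have hq0 : 0 < Real.sqrt (ca * cb * (ca + cb - 1)) := Real.sqrt_pos.2 hD
  have hq2 : Real.sqrt (ca * cb * (ca + cb - 1)) ^ 2 = ca * cb * (ca + cb - 1) :=
    Real.sq_sqrt hD.le
  have hA : 0 < ca * (ca + cb - 1) + cb := by positivity
  have hA2 : 2 * Real.sqrt (ca * cb * (ca + cb - 1)) ≤ ca * (ca + cb - 1) + cb := by
    nlinarith [sq_nonneg (ca * (ca + cb - 1) - cb),
      sq_nonneg (ca * (ca + cb - 1) + cb - 2 * Real.sqrt (ca * cb * (ca + cb - 1)))]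
  have hB : 0 < cb * (ca + cb - 1) + ca := by positivity
  have hB2 : 2 * Real.sqrt (ca * cb * (ca + cb - 1)) ≤ cb * (ca + cb - 1) + ca := by
    nlinarith [sq_nonneg (cb * (ca + cb - 1) - ca),
      sq_nonneg (cb * (ca + cb - 1) + ca - 2 * Real.sqrt (ca * cb * (ca + cb - 1)))]
  refine ⟨?_, ?_, ?_, ?_, ?_⟩
  · unfold lamMinus
    apply div_nonneg (by linarith) (by positivity)
  · unfold lamMinus lamPlus
    rw [div_lt_div_iff₀ (by positivity) (by positivity)]
    nlinarith [sq_nonneg (ca + cb)]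
  · unfold lamPlus
    rw [div_le_one (by positivity)]
    nlinarith
  · have hab : lamMinus ca cb * lamPlus ca cb = ((ca - 1) / (ca + cb)) ^ 2 := by
      unfold lamMinus lamPlus
      rw [div_mul_div_comm, div_pow, div_eq_div_iff (by positivity) (by positivity)]
      linear_combination ((-(4:ℝ)) * (ca+cb)^2) * hq2
    rw [hab, Real.sqrt_sq_eq_abs, abs_div, abs_of_pos hs]
  · have hab : (1 - lamMinus ca cb) * (1 - lamPlus ca cb) = ((cb - 1) / (ca + cb)) ^ 2 := by
      unfold lamMinus lamPlus
      rw [one_sub_div (by positivity), one_sub_div (by positivity),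
        div_mul_div_comm, div_pow, div_eq_div_iff (by positivity) (by positivity)]
      linear_combination ((-(4:ℝ)) * (ca+cb)^2) * hq2
    rw [hab, Real.sqrt_sq_eq_abs, abs_div, abs_of_pos hs]

end WachterAux

/-- The Wachter measure is a probability measure. -/
theorem sigmaJUE_univ (ca cb : ℝ) (hca : 0 < ca) (hcb : 0 < cb) (hsum : 1 < ca + cb) :
    sigmaJUE ca cb Set.univ = 1 := by
  obtain ⟨ha0, hab, hb1, hsab, hsab'⟩ := wachter_lam_facts hca hcb hsum
  set a := lamMinus ca cb with ha_def
  set b := lamPlus ca cb with hb_def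
  have hs : 0 < ca + cb := by linarith
  -- the real-valued density integral
  have hpt : ∀ x : ℝ, (ca + cb) * Real.sqrt ((b - x) * (x - a)) / (2 * π * x * (1 - x))
      = ((ca + cb) / (2 * π)) * (Real.sqrt ((b - x) * (x - a)) / (x * (1 - x))) := by
    intro x
    rw [div_mul_div_comm]
    congr 1
    ring
  have hInt : IntegrableOn
      (fun x => (ca + cb) * Real.sqrt ((b - x) * (x - a)) / (2 * π * x * (1 - x)))
      (Set.Ioo a b) := by
    have := (wachter_integrableOn ha0 hab hb1).const_mul ((ca + cb) / (2 * π))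
    exact MeasureTheory.IntegrableOn.congr_fun this (fun x _ => (hpt x).symm) measurableSet_Ioo
  have hIval : ∫ x in Set.Ioo a b,
      (ca + cb) * Real.sqrt ((b - x) * (x - a)) / (2 * π * x * (1 - x))
      = (ca + cb) / 2 * (1 - |ca - 1| / (ca + cb) - |cb - 1| / (ca + cb)) := by
    calc ∫ x in Set.Ioo a b,
        (ca + cb) * Real.sqrt ((b - x) * (x - a)) / (2 * π * x * (1 - x))
        = ∫ x in Set.Ioo a b,
            ((ca + cb) / (2 * π)) * (Real.sqrt ((b - x) * (x - a)) / (x * (1 - x))) := by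
          exact setIntegral_congr_fun measurableSet_Ioo (fun x _ => hpt x)
      _ = ((ca + cb) / (2 * π)) *
            ∫ x in Set.Ioo a b, Real.sqrt ((b - x) * (x - a)) / (x * (1 - x)) := by
          rw [integral_const_mul]
      _ = ((ca + cb) / (2 * π)) * (π * (1 - Real.sqrt (a*b) - Real.sqrt ((1-a)*(1-b)))) := by
          rw [wachter_integral ha0 hab hb1]
      _ = (ca + cb) / 2 * (1 - |ca - 1| / (ca + cb) - |cb - 1| / (ca + cb)) := by
          rw [hsab, hsab']
          have hπ : π ≠ 0 := Real.pi_ne_zero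
          field_simp
  -- lintegral of the density
  have hlint : (∫⁻ x, (if x ∈ Set.Ioo a b then
        ENNReal.ofReal ((ca + cb) * Real.sqrt ((b - x) * (x - a)) / (2 * π * x * (1 - x)))
        else 0) ∂volume)
      = ENNReal.ofReal ((ca + cb) / 2 * (1 - |ca - 1| / (ca + cb) - |cb - 1| / (ca + cb))) := by
    rw [← hIval]
    have step1 : (∫⁻ x, (if x ∈ Set.Ioo a b then
          ENNReal.ofReal ((ca + cb) * Real.sqrt ((b - x) * (x - a)) / (2 * π * x * (1 - x)))
          else 0) ∂volume)
        = ∫⁻ x in Set.Ioo a b,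
            ENNReal.ofReal ((ca + cb) * Real.sqrt ((b - x) * (x - a)) / (2 * π * x * (1 - x)))
            ∂volume := by
      rw [← lintegral_indicator measurableSet_Ioo]
      apply lintegral_congr fun x => ?_
      by_cases hx : x ∈ Set.Ioo a b <;> simp [Set.indicator_apply, hx]
    rw [step1]
    rw [← ofReal_integral_eq_lintegral_ofReal hInt]
    filter_upwards [ae_restrict_mem measurableSet_Ioo] with x hx
    have hx0 : 0 < x := lt_of_le_of_lt ha0 hx.1
    have hx1 : x < 1 := lt_of_lt_of_le hx.2 hb1
    apply div_nonneg
    · exact mul_nonneg hs.le (Real.sqrt_nonneg _)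
    · have : (0:ℝ) < 2 * π * x * (1 - x) :=
        mul_pos (mul_pos (mul_pos two_pos Real.pi_pos) hx0) (by linarith)
      exact this.le
  -- expand the measure
  have hmeas : sigmaJUE ca cb Set.univ
      = ENNReal.ofReal (max 0 (1 - ca)) + ENNReal.ofReal (max 0 (1 - cb))
        + ENNReal.ofReal ((ca + cb) / 2 * (1 - |ca - 1| / (ca + cb) - |cb - 1| / (ca + cb))) := by
    rw [sigmaJUE]
    rw [Measure.add_apply, Measure.add_apply, Measure.smul_apply, Measure.smul_apply,
      withDensity_apply _ MeasurableSet.univ, Measure.restrict_univ]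
    rw [← ha_def, ← hb_def, hlint]
    simp [measure_univ]
  rw [hmeas]
  -- final real arithmetic
  have harith : max 0 (1 - ca) + (max 0 (1 - cb)
      + (ca + cb) / 2 * (1 - |ca - 1| / (ca + cb) - |cb - 1| / (ca + cb))) = 1 ∧
      0 ≤ (ca + cb) / 2 * (1 - |ca - 1| / (ca + cb) - |cb - 1| / (ca + cb)) := by
    have hW : (ca + cb) / 2 * (1 - |ca - 1| / (ca + cb) - |cb - 1| / (ca + cb))
        = (ca + cb - |ca - 1| - |cb - 1|) / 2 := by
      field_simp
    rw [hW]
    rcases le_total ca 1 with h1 | h1 <;> rcases le_total cb 1 with h2 | h2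
    · rw [abs_of_nonpos (by linarith), abs_of_nonpos (by linarith),
        max_eq_right (by linarith), max_eq_right (by linarith)]
      constructor <;> [ring_nf; skip] <;> linarith
    · rw [abs_of_nonpos (by linarith), abs_of_nonneg (by linarith),
        max_eq_right (by linarith), max_eq_left (by linarith)]
      constructor <;> [ring_nf; skip] <;> linarith
    · rw [abs_of_nonneg (by linarith), abs_of_nonpos (by linarith),
        max_eq_left (by linarith), max_eq_right (by linarith)]
      constructor <;> [ring_nf; skip] <;> linarith
    · rw [abs_of_nonneg (by linarith), abs_of_nonneg (by linarith),
        max_eq_left (by linarith), max_eq_left (by linarith)]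
      constructor <;> [ring_nf; skip] <;> linarith
  obtain ⟨hsum1, hWpos⟩ := harith
  rw [add_assoc, ← ENNReal.ofReal_add (le_max_left _ _) hWpos,
    ← ENNReal.ofReal_add (le_max_left _ _) (add_nonneg (le_max_left _ _) hWpos),
    hsum1, ENNReal.ofReal_one]
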